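/- In the three-qubit space ℂ² ⊗ ℂ² ⊗ ℂ², let G be the linear span of the three vectors e_0⊗e_0⊗e_1 + e_0⊗e_1⊗e_0 − e_1⊗e_0⊗e_0, e_0⊗e_1⊗e_0 + e_0⊗e_1⊗e_1 − e_1⊗e_0⊗e_1, and e_0⊗e_0⊗e_0 − e_1⊗e_1⊗e_1. Then dim G = 3 and G is a genuinely entangled subspace: every nonzero v ∈ G is genuinely multiparty entangled, i.e., v cannot be written as φ ⊗ χ across any of the three bipartitions {1}|{2,3}, {2}|{1,3}, {3}|{1,2} (under the corresponding canonical factor-reordering isomorphisms). -/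

import Mathlib

noncomputable section

/-- The `N`-qudit Hilbert space `(ℂ^d)^{⊗N}`, realized as the Euclidean space whose
coordinates are indexed by tuples of local indices. -/
abbrev QSpace (N d : ℕ) := EuclideanSpace ℂ (Fin N → Fin d)

/-- `v` is biproduct: for some bipartition `S|Sᶜ` of the parties, `v = φ ⊗ χ` with
`φ` a vector on the parties in `S` and `χ` a vector on the parties in `Sᶜ`
(under the canonical factor-reordering isomorphism). -/
def Biproduct {N d : ℕ} (v : QSpace N d) : Prop :=
  ∃ S : Set (Fin N), S.Nonempty ∧ S ≠ Set.univ ∧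
    ∃ (φ : ((i : S) → Fin d) → ℂ) (χ : ((i : ↥Sᶜ) → Fin d) → ℂ),
      ∀ f : Fin N → Fin d, v f = φ (fun i => f i) * χ (fun i => f i)

/-- A vector is genuinely multiparty entangled if it is nonzero and not biproduct. -/
def GME {N d : ℕ} (v : QSpace N d) : Prop :=
  v ≠ 0 ∧ ¬ Biproduct v

/-- A genuinely entangled subspace: all its nonzero vectors are GME. -/
def IsGES {N d : ℕ} (G : Submodule ℂ (QSpace N d)) : Prop :=
  ∀ v ∈ G, v ≠ 0 → GME v

/-- The standard basis vector `e_{x 0} ⊗ e_{x 1} ⊗ e_{x 2}` of `ℂ² ⊗ ℂ² ⊗ ℂ²`. -/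
def bvec (x : Fin 3 → Fin 2) : QSpace 3 2 :=
  WithLp.toLp 2 (fun f => if f = x then 1 else 0)

/-!
If `v = φ ⊗ χ` across a bipartition `S | Sᶜ`, then `v f * v g = v f' * v g'` whenever `f'`, `g'`
arise from `f`, `g` by exchanging their entries on `S`: the flattening of `v` along the cut has
rank one, so its `2 × 2` minors vanish. With three parties one side of the cut is a single party
`k`. For `v = a • u₁ + b • u₂ + c • u₃`, three to five such minors already force `a = b = c = 0`,
whichever `k` is cut off. Linear independence of `u₁, u₂, u₃` is read off the coordinates at
`001`, `011` and `000`.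
-/

theorem Set.exists_eq_singleton_or_eq_compl_singleton {α : Type*} [Finite α]
    (hα : Nat.card α = 3) {S : Set α} (hne : S.Nonempty) (hS : S ≠ Set.univ) :
    ∃ k, S = {k} ∨ S = {k}ᶜ := by
  have hcard := Set.ncard_add_ncard_compl S
  have hpos := (Set.ncard_pos (s := S)).mpr hne
  have hpos' := (Set.ncard_pos (s := Sᶜ)).mpr (Set.nonempty_compl.mpr hS)
  obtain hone | hone : S.ncard = 1 ∨ Sᶜ.ncard = 1 := by omega
  · obtain ⟨k, hk⟩ := Set.ncard_eq_one.mp hone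
    exact ⟨k, .inl hk⟩
  · obtain ⟨k, hk⟩ := Set.ncard_eq_one.mp hone
    exact ⟨k, .inr (eq_compl_comm.mp hk.symm)⟩

theorem mul_apply_eq_piecewise_mul_piecewise {N d : ℕ} {v : QSpace N d} {S : Set (Fin N)}
    [DecidablePred (· ∈ S)] {φ : ((i : S) → Fin d) → ℂ} {χ : ((i : ↥Sᶜ) → Fin d) → ℂ}
    (hv : ∀ f : Fin N → Fin d, v f = φ (fun i => f i) * χ (fun i => f i))
    (f g : Fin N → Fin d) :
    v f * v g = v (S.piecewise f g) * v (S.piecewise g f) := by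
  have hS (f g : Fin N → Fin d) : (fun i : S => S.piecewise f g i) = fun i : S => f i :=
    funext fun i => Set.piecewise_eq_of_mem _ _ _ i.2
  have hSc (f g : Fin N → Fin d) : (fun i : ↥Sᶜ => S.piecewise f g i) = fun i : ↥Sᶜ => g i :=
    funext fun i => Set.piecewise_eq_of_notMem _ _ _ i.2
  rw [hv, hv, hv, hv, hS, hSc, hS, hSc]
  ring

/-- The `2 × 2` minors of the flattening of `v` along the cut `{k} | {k}ᶜ` vanish. -/
def SplitsAt {N d : ℕ} (v : QSpace N d) (k : Fin N) : Prop :=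
  ∀ f g, v f * v g = v (Function.update f k (g k)) * v (Function.update g k (f k))

theorem Biproduct.exists_splitsAt {d : ℕ} {v : QSpace 3 d} (hv : Biproduct v) :
    ∃ k, SplitsAt v k := by
  classical
  obtain ⟨S, hne, hS, φ, χ, hfac⟩ := hv
  have key := mul_apply_eq_piecewise_mul_piecewise hfac
  obtain ⟨k, rfl | rfl⟩ := Set.exists_eq_singleton_or_eq_compl_singleton (by simp) hne hS
  · refine ⟨k, fun f g => ?_⟩
    rw [key, Set.piecewise_singleton, Set.piecewise_singleton, mul_comm]
  · refine ⟨k, fun f g => ?_⟩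
    rw [key, Set.piecewise_compl, Set.piecewise_compl, Set.piecewise_singleton,
      Set.piecewise_singleton]

def u₁ : QSpace 3 2 := bvec ![0, 0, 1] + bvec ![0, 1, 0] - bvec ![1, 0, 0]
def u₂ : QSpace 3 2 := bvec ![0, 1, 0] + bvec ![0, 1, 1] - bvec ![1, 0, 1]
def u₃ : QSpace 3 2 := bvec ![0, 0, 0] - bvec ![1, 1, 1]

section
variable {a b c : ℂ}

attribute [local simp] u₁ u₂ u₃ bvec

theorem eq_zero_of_smul_add_smul_add_smul_eq_zero (h : a • u₁ + b • u₂ + c • u₃ = 0) :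
    a = 0 ∧ b = 0 ∧ c = 0 := by
  have ha : a = 0 := by simpa +decide using congr($h ![0, 0, 1])
  have hb : b = 0 := by simpa +decide using congr($h ![0, 1, 1])
  have hc : c = 0 := by simpa +decide using congr($h ![0, 0, 0])
  exact ⟨ha, hb, hc⟩

theorem linearIndependent_u : LinearIndependent ℂ ![u₁, u₂, u₃] := by
  refine Fintype.linearIndependent_iff.mpr fun g hg => ?_
  rw [Fin.sum_univ_three] at hg
  obtain ⟨h₀, h₁, h₂⟩ := eq_zero_of_smul_add_smul_add_smul_eq_zero hg
  intro i
  fin_cases i <;> assumption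

theorem finrank_span_u : Module.finrank ℂ (Submodule.span ℂ {u₁, u₂, u₃}) = 3 := by
  have h : Set.range ![u₁, u₂, u₃] = {u₁, u₂, u₃} := by
    rw [Matrix.range_cons, Matrix.range_cons_cons_empty, Set.singleton_union]
  rw [← h, finrank_span_eq_card linearIndependent_u, Fintype.card_fin]

theorem eq_zero_of_splitsAt_zero (h : SplitsAt (a • u₁ + b • u₂ + c • u₃) 0) :
    a = 0 ∧ b = 0 ∧ c = 0 := by
  have e₁ : (a + b) * -a = 0 * c := by simpa +decide using h ![0, 1, 0] ![1, 0, 0]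
  have e₂ : (a + b) * -b = 0 * a := by simpa +decide using h ![0, 1, 0] ![1, 0, 1]
  have e₃ : c * -b = -a * a := by simpa +decide using h ![0, 0, 0] ![1, 0, 1]
  have e₄ : c * -c = -a * b := by simpa +decide using h ![0, 0, 0] ![1, 1, 1]
  have e₅ : a * -c = -b * b := by simpa +decide using h ![0, 0, 1] ![1, 1, 1]
  have hab : a + b = 0 := mul_self_eq_zero.mp (by linear_combination -e₁ - e₂)
  -- with `b = -a`, `e₃ + e₅` reads `2 a² = 0`
  have ha : a = 0 := mul_self_eq_zero.mp
    (by linear_combination (1/2 : ℂ) * e₃ + (1/2 : ℂ) * e₅ + ((a - b + c) / 2) * hab)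
  have hb : b = 0 := by linear_combination hab - ha
  exact ⟨ha, hb, mul_self_eq_zero.mp (by linear_combination -e₄ + b * ha)⟩

theorem eq_zero_of_splitsAt_one (h : SplitsAt (a • u₁ + b • u₂ + c • u₃) 1) :
    a = 0 ∧ b = 0 ∧ c = 0 := by
  have e₁ : -a * (a + b) = 0 * c := by simpa +decide using h ![1, 0, 0] ![0, 1, 0]
  have e₂ : -a * b = 0 * a := by simpa +decide using h ![1, 0, 0] ![0, 1, 1]
  have e₃ : a * -c = b * -b := by simpa +decide using h ![0, 0, 1] ![1, 1, 1]
  have e₄ : c * -c = (a + b) * -b := by simpa +decide using h ![0, 0, 0] ![1, 1, 1]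
  have ha : a = 0 := mul_self_eq_zero.mp (by linear_combination -e₁ + e₂)
  have hb : b = 0 := mul_self_eq_zero.mp (by linear_combination e₃ + c * ha)
  exact ⟨ha, hb, mul_self_eq_zero.mp (by linear_combination -e₄ + (a + b) * hb)⟩

theorem eq_zero_of_splitsAt_two (h : SplitsAt (a • u₁ + b • u₂ + c • u₃) 2) :
    a = 0 ∧ b = 0 ∧ c = 0 := by
  have e₁ : 0 * a = -c * c := by simpa +decide using h ![1, 1, 0] ![0, 0, 1]
  have e₂ : (a + b) * -b = b * -a := by simpa +decide using h ![0, 1, 0] ![1, 0, 1]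
  have e₃ : c * b = a * (a + b) := by simpa +decide using h ![0, 0, 0] ![0, 1, 1]
  have hc : c = 0 := mul_self_eq_zero.mp (by linear_combination e₁)
  have hb : b = 0 := mul_self_eq_zero.mp (by linear_combination -e₂)
  exact ⟨mul_self_eq_zero.mp (by linear_combination -e₃ + (c - a) * hb), hb, hc⟩

end

/-- In the three-qubit space, the span `G` of
`|001⟩ + |010⟩ − |100⟩`, `|010⟩ + |011⟩ − |101⟩` and `|000⟩ − |111⟩` has dimension 3 and
is a genuinely entangled subspace: every nonzero vector of `G` is GME. -/
theorem stmt17 :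
    Module.finrank ℂ (Submodule.span ℂ
      {bvec ![0, 0, 1] + bvec ![0, 1, 0] - bvec ![1, 0, 0],
       bvec ![0, 1, 0] + bvec ![0, 1, 1] - bvec ![1, 0, 1],
       bvec ![0, 0, 0] - bvec ![1, 1, 1]}) = 3 ∧
    IsGES (Submodule.span ℂ
      {bvec ![0, 0, 1] + bvec ![0, 1, 0] - bvec ![1, 0, 0],
       bvec ![0, 1, 0] + bvec ![0, 1, 1] - bvec ![1, 0, 1],
       bvec ![0, 0, 0] - bvec ![1, 1, 1]}) := by
  refine ⟨finrank_span_u, fun v hv hv0 => ⟨hv0, fun hbi => hv0 ?_⟩⟩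
  obtain ⟨a, b, c, rfl⟩ := Submodule.mem_span_triple.mp hv
  obtain ⟨k, hk⟩ := hbi.exists_splitsAt
  obtain ⟨rfl, rfl, rfl⟩ : a = 0 ∧ b = 0 ∧ c = 0 := by
    fin_cases k
    exacts [eq_zero_of_splitsAt_zero hk, eq_zero_of_splitsAt_one hk, eq_zero_of_splitsAt_two hk]
  simp
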